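/- Let a > 0, σ > 0 and y be real numbers with σ·a < π. Then the function s ↦ (a/sinh(a(s−iσ)))·e^{i(s−iσ)y} is integrable over ℝ and (1/(2πi)) ∫_ℝ (a/sinh(a(s−iσ)))·e^{i(s−iσ)y} ds = e^{πy/a}/(1 + e^{πy/a}). -/

import Mathlib

/-
Let `E = exp (π y / a)` and let `J` be the integral of the kernel `a exp (i z y) / sinh (a z)`
over the line `Im z = -σ`. The function `a (exp (i z y) - E) / sinh (a z)` is holomorphic on the
strip `-σ - π/a ≤ Im z ≤ -σ`, because the only zero `-iπ/a` of `sinh (a z)` there is cancelled by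
the numerator, and it decays as `|Re z| → ∞`; so its integrals over the two boundary lines agree.
As `sinh (a (z - iπ/a)) = -sinh (a z)`, on the lower line the kernel is `-E` times its value on the
upper line and `a / sinh (a z)` is `-1` times it. The integral of `a / sinh (a z)` over the upper
line is `πi`: its real part is odd and its imaginary part has the primitive
`arctan (sinh (a x) / sin (a σ))`. Hence `-E J + E πi = J - E πi`, that is `J (1 + E) = 2πi E`.
-/

open Complex MeasureTheory Real Set Filter Topology ComplexConjugate Interval

noncomputable section

namespace Complex

theorem add_mul_I_re (x t : ℝ) : ((x : ℂ) + t * I).re = x := by simp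

theorem add_mul_I_im (x t : ℝ) : ((x : ℂ) + t * I).im = t := by simp

theorem sinh_re (z : ℂ) : (sinh z).re = Real.sinh z.re * Real.cos z.im := by
  conv_lhs => rw [← re_add_im z, sinh_add, sinh_mul_I, cosh_mul_I]
  simp [← ofReal_sinh, ← ofReal_cosh, ← ofReal_cos, ← ofReal_sin]

theorem sinh_im (z : ℂ) : (sinh z).im = Real.cosh z.re * Real.sin z.im := by
  conv_lhs => rw [← re_add_im z, sinh_add, sinh_mul_I, cosh_mul_I]
  simp [← ofReal_sinh, ← ofReal_cosh, ← ofReal_cos, ← ofReal_sin]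

theorem normSq_sinh (z : ℂ) : normSq (sinh z) = Real.sinh z.re ^ 2 + Real.sin z.im ^ 2 := by
  rw [normSq_apply, sinh_re, sinh_im]
  linear_combination (Real.sinh z.re ^ 2) * Real.sin_sq_add_cos_sq z.im +
    Real.sin z.im ^ 2 * Real.cosh_sq z.re

theorem sq_norm_sinh (z : ℂ) : ‖sinh z‖ ^ 2 = Real.sinh z.re ^ 2 + Real.sin z.im ^ 2 := by
  rw [Complex.sq_norm, normSq_sinh]

theorem abs_sinh_re_le_norm_sinh (z : ℂ) : |Real.sinh z.re| ≤ ‖sinh z‖ := by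
  refine (pow_le_pow_iff_left₀ (abs_nonneg _) (norm_nonneg _) two_ne_zero).mp ?_
  rw [sq_norm_sinh, sq_abs]
  nlinarith [sq_nonneg (Real.sin z.im)]

theorem abs_sin_im_mul_cosh_re_le_norm_sinh (z : ℂ) :
    |Real.sin z.im| * Real.cosh z.re ≤ ‖sinh z‖ := by
  refine (pow_le_pow_iff_left₀ (by positivity) (norm_nonneg _) two_ne_zero).mp ?_
  rw [sq_norm_sinh, mul_pow, sq_abs, Real.cosh_sq]
  nlinarith [Real.sin_sq_le_one z.im, sq_nonneg (Real.sinh z.re)]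

theorem sinh_eq_zero_iff {z : ℂ} : sinh z = 0 ↔ z.re = 0 ∧ Real.sin z.im = 0 := by
  rw [← normSq_eq_zero, normSq_sinh, add_eq_zero_iff_of_nonneg (sq_nonneg _) (sq_nonneg _),
    sq_eq_zero_iff, sq_eq_zero_iff, Real.sinh_eq_zero]

theorem eq_neg_pi_mul_I_of_sinh_eq_zero {w : ℂ} (hw : w.im ∈ Ioo (-(2 * π)) 0)
    (h : sinh w = 0) : w = -π * I := by
  obtain ⟨hre, him⟩ := sinh_eq_zero_iff.mp h
  have hπ : w.im + π = 0 := by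
    refine (Real.sin_eq_zero_iff_of_lt_of_lt (by linarith [hw.1]) (by linarith [hw.2])).mp ?_
    rw [Real.sin_add_pi, him, neg_zero]
  refine Complex.ext (by simpa using hre) ?_
  simpa using (by linarith : w.im = -π)

end Complex

theorem Real.one_add_sq_div_two_le_cosh (u : ℝ) : 1 + u ^ 2 / 2 ≤ Real.cosh u := by
  have h : |u / 2| ≤ |Real.sinh (u / 2)| := by
    rw [Real.abs_sinh]; exact Real.self_le_sinh_iff.mpr (abs_nonneg _)
  calc 1 + u ^ 2 / 2 = 1 + 2 * (u / 2) ^ 2 := by ring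
    _ ≤ 1 + 2 * Real.sinh (u / 2) ^ 2 := by linarith [sq_le_sq.mpr h]
    _ = Real.cosh (2 * (u / 2)) := by rw [Real.cosh_two_mul, Real.cosh_sq]; ring
    _ = Real.cosh u := by rw [mul_div_cancel₀ u two_ne_zero]

theorem integrable_inv_cosh_mul {a : ℝ} (ha : a ≠ 0) :
    Integrable fun x : ℝ => (Real.cosh (a * x))⁻¹ := by
  refine ((integrable_inv_one_add_sq.comp_mul_left' ha).const_mul 2).mono'
    (by fun_prop) (Eventually.of_forall fun x => ?_)
  have h := Real.one_add_sq_div_two_le_cosh (a * x)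
  rw [norm_inv, Real.norm_of_nonneg (Real.cosh_pos _).le]
  calc (Real.cosh (a * x))⁻¹ ≤ (1 + (a * x) ^ 2 / 2)⁻¹ := inv_anti₀ (by positivity) h
    _ ≤ 2 * (1 + (a * x) ^ 2)⁻¹ := by
      rw [← div_eq_mul_inv, inv_le_comm₀ (by positivity) (by positivity), inv_div]
      linarith

theorem tendsto_abs_sinh_mul_cocompact {a : ℝ} (ha : a ≠ 0) :
    Tendsto (fun x => |Real.sinh (a * x)|) (cocompact ℝ) atTop := by
  simp_rw [Real.abs_sinh, abs_mul]
  exact Real.sinhOrderIso.tendsto_atTop.comp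
    (tendsto_norm_cocompact_atTop.const_mul_atTop (abs_pos.mpr ha))

theorem sin_mul_sub_pi_div {a : ℝ} (ha : a ≠ 0) (t : ℝ) :
    Real.sin (a * (t - π / a)) = -Real.sin (a * t) := by
  rw [mul_sub, mul_div_cancel₀ _ ha, Real.sin_sub_pi]

theorem hasDerivAt_arctan_sinh_mul_div (a m x : ℝ) (hm : m ≠ 0) :
    HasDerivAt (fun x => Real.arctan (Real.sinh (a * x) / m))
      (a * Real.cosh (a * x) * m / (Real.sinh (a * x) ^ 2 + m ^ 2)) x := by
  have h := ((((hasDerivAt_id' x).const_mul a).sinh).div_const m).arctan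
  refine h.congr_deriv ?_
  field_simp
  ring

theorem tendsto_integral_vertical_cocompact {F : ℂ → ℂ} {b₁ b₂ : ℝ} {B : ℝ → ℝ}
    (hB : Tendsto B (cocompact ℝ) (𝓝 0))
    (hFB : ∀ᶠ x : ℝ in cocompact ℝ, ∀ t ∈ [[b₁, b₂]], ‖F (x + t * I)‖ ≤ B x) :
    Tendsto (fun x : ℝ => ∫ t in b₁..b₂, F (x + t * I)) (cocompact ℝ) (𝓝 0) := by
  refine squeeze_zero_norm' ?_ (by simpa using hB.mul_const |b₂ - b₁|)
  filter_upwards [hFB] with x hx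
  exact intervalIntegral.norm_integral_le_of_norm_le_const fun t ht => hx t (uIoc_subset_uIcc ht)

theorem integral_add_mul_I_eq_of_differentiableOn_strip {F : ℂ → ℂ} {b₁ b₂ : ℝ} {B : ℝ → ℝ}
    (hF : DifferentiableOn ℂ F (im ⁻¹' [[b₁, b₂]]))
    (hB : Tendsto B (cocompact ℝ) (𝓝 0))
    (hFB : ∀ᶠ x : ℝ in cocompact ℝ, ∀ t ∈ [[b₁, b₂]], ‖F (x + t * I)‖ ≤ B x)
    (h₁ : Integrable fun x : ℝ => F (x + b₁ * I)) (h₂ : Integrable fun x : ℝ => F (x + b₂ * I)) :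
    ∫ x : ℝ, F (x + b₁ * I) = ∫ x : ℝ, F (x + b₂ * I) := by
  have hrect : ∀ T : ℝ, (∫ x in -T..T, F (x + b₁ * I)) - ∫ x in -T..T, F (x + b₂ * I) =
      I • (∫ t in b₁..b₂, F (-T + t * I)) - I • ∫ t in b₁..b₂, F (T + t * I) := by
    intro T
    have h := integral_boundary_rect_eq_zero_of_differentiableOn F ((-T : ℝ) + b₁ * I) (T + b₂ * I)
      (hF.mono fun z hz => by simpa using hz.2)
    simp only [add_mul_I_re, add_mul_I_im] at h
    rw [ofReal_neg] at h
    linear_combination h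
  have hvert := tendsto_integral_vertical_cocompact hB hFB
  have hsides : Tendsto (fun T : ℝ => I • (∫ t in b₁..b₂, F (-T + t * I)) -
      I • ∫ t in b₁..b₂, F (T + t * I)) atTop (𝓝 0) := by
    simpa using ((hvert.comp (tendsto_neg_atTop_atBot.mono_right atBot_le_cocompact)).const_smul
      I).sub ((hvert.comp (tendsto_id.mono_right atTop_le_cocompact)).const_smul I)
  have hlines := (intervalIntegral_tendsto_integral h₁ tendsto_neg_atTop_atBot tendsto_id).sub
    (intervalIntegral_tendsto_integral h₂ tendsto_neg_atTop_atBot tendsto_id)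
  exact sub_eq_zero.mp (tendsto_nhds_unique hlines (hsides.congr fun T => (hrect T).symm))

theorem dslope_div_dslope_eq {g h : ℂ → ℂ} {c z : ℂ} (hc : h c = 0) (hz : h z ≠ 0) :
    dslope g c z / dslope h c z = (g z - g c) / h z := by
  have hzc : z ≠ c := by rintro rfl; exact hz hc
  rw [dslope_of_ne _ hzc, dslope_of_ne _ hzc, slope_def_field, slope_def_field, hc, sub_zero]
  field_simp [sub_ne_zero.mpr hzc]

theorem differentiableAt_dslope_div_dslope {g h : ℂ → ℂ} {c z : ℂ} (hg : Differentiable ℂ g)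
    (hh : Differentiable ℂ h) (hc : h c = 0) (hc' : deriv h c ≠ 0) (hz : h z = 0 → z = c) :
    DifferentiableAt ℂ (fun w => dslope g c w / dslope h c w) z := by
  have hdslope {f : ℂ → ℂ} (hf : Differentiable ℂ f) : DifferentiableAt ℂ (dslope f c) z :=
    ((differentiableOn_dslope univ_mem).mpr hf.differentiableOn z (mem_univ z)).differentiableAt
      univ_mem
  refine (hdslope hg).div (hdslope hh) ?_
  rcases eq_or_ne z c with rfl | hzc
  · rwa [dslope_same]
  · rw [dslope_of_ne _ hzc, slope_def_field, hc, sub_zero]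
    exact div_ne_zero (mt hz hzc) (sub_ne_zero.mpr hzc)

theorem sinh_mul_line_ne_zero {a s : ℝ} (hs : Real.sin (a * s) ≠ 0) (x : ℝ) :
    Complex.sinh (a * (x + s * I)) ≠ 0 := by
  rw [Ne, Complex.sinh_eq_zero_iff]
  simp [hs]

def cschExp (a y : ℝ) (z : ℂ) : ℂ := a / Complex.sinh (a * z) * Complex.exp (I * z * y)

theorem norm_cschExp (a y : ℝ) (z : ℂ) :
    ‖cschExp a y z‖ = |a| * Real.exp (-(z.im * y)) / ‖Complex.sinh (a * z)‖ := by
  have hre : (I * z * y).re = -(z.im * y) := by simp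
  rw [cschExp, norm_mul, norm_div, Complex.norm_exp, norm_real, Real.norm_eq_abs, hre]
  ring

theorem cschExp_sub_pi_div_mul_I {a : ℝ} (ha : a ≠ 0) (y : ℝ) (z : ℂ) :
    cschExp a y (z - π / a * I) = -(Real.exp (π * y / a) : ℂ) * cschExp a y z := by
  have ha' : (a : ℂ) ≠ 0 := ofReal_ne_zero.mpr ha
  have harg : (a : ℂ) * (z - π / a * I) = a * z - π * I := by field_simp
  have hexp : I * (z - π / a * I) * y = I * z * y + π * y / a := by
    linear_combination (-(π * y / a : ℂ)) * I_sq
  rw [cschExp, cschExp, harg, Complex.sinh_sub_pi_mul_I, hexp, Complex.exp_add]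
  push_cast
  field_simp

theorem integrable_cschExp_line {a t : ℝ} (ht : Real.sin (a * t) ≠ 0) (y : ℝ) :
    Integrable fun x : ℝ => cschExp a y (x + t * I) := by
  have ha : a ≠ 0 := by rintro rfl; simp at ht
  refine ((integrable_inv_cosh_mul ha).const_mul
      (|a| * Real.exp (-(t * y)) / |Real.sin (a * t)|)).mono'
    (by unfold cschExp; fun_prop) (Eventually.of_forall fun x => ?_)
  have hlow := Complex.abs_sin_im_mul_cosh_re_le_norm_sinh (a * (x + t * I))
  rw [norm_cschExp, ← div_eq_mul_inv, div_div]
  simp only [re_ofReal_mul, im_ofReal_mul, add_mul_I_re, add_mul_I_im] at hlow ⊢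
  gcongr

theorem integrable_div_sinh_line {a t : ℝ} (ht : Real.sin (a * t) ≠ 0) :
    Integrable fun x : ℝ => (a : ℂ) / Complex.sinh (a * (x + t * I)) := by
  simpa [cschExp] using integrable_cschExp_line ht 0

theorem div_sinh_line_neg (a t x : ℝ) :
    (a : ℂ) / Complex.sinh (a * ((-x : ℝ) + t * I)) =
      -conj ((a : ℂ) / Complex.sinh (a * (x + t * I))) := by
  have harg : (a : ℂ) * ((-x : ℝ) + t * I) = -conj ((a : ℂ) * (x + t * I)) := by
    simp only [map_mul, map_add, conj_ofReal, conj_I, ofReal_neg]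
    ring
  rw [harg, Complex.sinh_neg, Complex.sinh_conj, map_div₀, conj_ofReal, div_neg]

theorem integral_im_div_sinh_line {a t : ℝ} (ha : 0 < a) (ht : Real.sin (a * t) < 0) :
    ∫ x : ℝ, ((a : ℂ) / Complex.sinh (a * (x + t * I))).im = π := by
  set m := -Real.sin (a * t) with hm
  have hm0 : 0 < m := neg_pos.mpr ht
  have him : ∀ x : ℝ, ((a : ℂ) / Complex.sinh (a * (x + t * I))).im =
      a * Real.cosh (a * x) * m / (Real.sinh (a * x) ^ 2 + m ^ 2) := by
    intro x
    rw [div_im, normSq_sinh, sinh_re, sinh_im, re_ofReal_mul, im_ofReal_mul, add_mul_I_re,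
      add_mul_I_im, ofReal_re, ofReal_im, hm]
    ring
  have hsinh : Tendsto (fun x => Real.sinh (a * x) / m) atTop atTop :=
    (Real.sinhOrderIso.tendsto_atTop.comp (tendsto_id.const_mul_atTop ha)).atTop_div_const hm0
  have hsinh' : Tendsto (fun x => Real.sinh (a * x) / m) atBot atBot :=
    (Real.sinhOrderIso.tendsto_atBot.comp (tendsto_id.const_mul_atBot ha)).atBot_div_const hm0
  simp_rw [him]
  rw [integral_of_hasDerivAt_of_tendsto (fun x => hasDerivAt_arctan_sinh_mul_div a m x hm0.ne')
    ((integrable_div_sinh_line ht.ne).im.congr (.of_forall him))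
    ((tendsto_nhds_of_tendsto_nhdsWithin Real.tendsto_arctan_atBot).comp hsinh')
    ((tendsto_nhds_of_tendsto_nhdsWithin Real.tendsto_arctan_atTop).comp hsinh)]
  ring

theorem integral_div_sinh_line {a t : ℝ} (ha : 0 < a) (ht : Real.sin (a * t) < 0) :
    ∫ x : ℝ, (a : ℂ) / Complex.sinh (a * (x + t * I)) = π * I := by
  have hodd : ∫ x : ℝ, (a : ℂ) / Complex.sinh (a * (x + t * I)) =
      -conj (∫ x : ℝ, (a : ℂ) / Complex.sinh (a * (x + t * I))) := by
    conv_lhs => rw [← integral_neg_eq_self]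
    simp only [div_sinh_line_neg, integral_neg, integral_conj]
  apply Complex.ext
  · have h := congrArg re hodd
    simp only [neg_re, conj_re] at h
    simp only [mul_re, ofReal_re, ofReal_im, I_re, I_im]
    linarith
  · simpa using (integral_im (integrable_div_sinh_line ht.ne)).symm.trans
      (integral_im_div_sinh_line ha ht)

/-- `cschExp a y - exp (π y / a) * cschExp a 0` with its removable singularity at `-iπ/a` filled
in: `exp (π y / a)` is the numerator at that pole, and `dslope` supplies the derivatives there. -/
def cschExpReg (a y : ℝ) (z : ℂ) : ℂ :=
  a * (dslope (fun w => Complex.exp (I * w * y)) (-(π / a * I)) z /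
    dslope (fun w => Complex.sinh (a * w)) (-(π / a * I)) z)

theorem cschExpReg_eq {a : ℝ} (ha : a ≠ 0) (y : ℝ) {z : ℂ} (hz : Complex.sinh (a * z) ≠ 0) :
    cschExpReg a y z = cschExp a y z - Real.exp (π * y / a) * cschExp a 0 z := by
  have ha' : (a : ℂ) ≠ 0 := ofReal_ne_zero.mpr ha
  have hpole : (a : ℂ) * -(π / a * I) = -(π * I) := by field_simp
  have hexp : I * -(π / a * I) * y = π * y / a := by
    linear_combination (-(π * y / a : ℂ)) * I_sq
  rw [cschExpReg, dslope_div_dslope_eq (h := fun w => Complex.sinh (a * w))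
    (by simp [hpole, sinh_mul_I]) hz, hexp, cschExp, cschExp]
  push_cast
  field_simp
  simp

theorem differentiableOn_cschExpReg {a : ℝ} (ha : 0 < a) (y : ℝ) :
    DifferentiableOn ℂ (cschExpReg a y) (im ⁻¹' Ioo (-(2 * π / a)) 0) := by
  have ha' : (a : ℂ) ≠ 0 := ofReal_ne_zero.mpr ha.ne'
  have hpole : (a : ℂ) * -(π / a * I) = -(π * I) := by field_simp
  intro z hz
  refine DifferentiableAt.differentiableWithinAt <|
    (differentiableAt_dslope_div_dslope (by fun_prop) (by fun_prop) ?_ ?_ ?_).const_mul (a : ℂ)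
  · simp [hpole, sinh_mul_I]
  · rw [(((hasDerivAt_id' _).const_mul (a : ℂ)).csinh).deriv]
    simp [hpole, cosh_mul_I, ha.ne']
  · intro h0
    have him : (a * z).im ∈ Ioo (-(2 * π)) 0 := by
      rw [im_ofReal_mul]
      constructor <;> nlinarith [hz.1, hz.2, mul_div_cancel₀ (2 * π) ha.ne']
    have h := Complex.eq_neg_pi_mul_I_of_sinh_eq_zero him h0
    field_simp
    linear_combination h

theorem norm_cschExpReg_le {a : ℝ} (ha : a ≠ 0) (y : ℝ) {z : ℂ} (hz : z.re ≠ 0) :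
    ‖cschExpReg a y z‖ ≤
      |a| * (Real.exp (|z.im| * |y|) + Real.exp (π * y / a)) / |Real.sinh (a * z.re)| := by
  have hlow : |Real.sinh (a * z.re)| ≤ ‖Complex.sinh (a * z)‖ := by
    simpa using Complex.abs_sinh_re_le_norm_sinh (a * z)
  have hpos : 0 < |Real.sinh (a * z.re)| := abs_pos.mpr (Real.sinh_ne_zero.mpr (mul_ne_zero ha hz))
  have hexp : Real.exp (-(z.im * y)) ≤ Real.exp (|z.im| * |y|) :=
    Real.exp_le_exp.mpr ((neg_le_abs _).trans (abs_mul _ _).le)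
  rw [cschExpReg_eq ha y (norm_pos_iff.mp (hpos.trans_le hlow))]
  calc _ ≤ ‖cschExp a y z‖ + Real.exp (π * y / a) * ‖cschExp a 0 z‖ := by
        refine (norm_sub_le _ _).trans_eq ?_
        rw [norm_mul, norm_real, Real.norm_of_nonneg (Real.exp_pos _).le]
    _ = |a| * (Real.exp (-(z.im * y)) + Real.exp (π * y / a)) / ‖Complex.sinh (a * z)‖ := by
        rw [norm_cschExp, norm_cschExp, mul_zero, neg_zero, Real.exp_zero]
        ring
    _ ≤ _ := by gcongr

theorem integrable_cschExpReg_line {a s : ℝ} (ha : a ≠ 0) (hs : Real.sin (a * s) ≠ 0) (y : ℝ) :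
    Integrable fun x : ℝ => cschExpReg a y (x + s * I) := by
  refine ((integrable_cschExp_line hs y).sub
    ((integrable_cschExp_line hs 0).const_mul (Real.exp (π * y / a) : ℂ))).congr
    (.of_forall fun x => ?_)
  exact (cschExpReg_eq ha y (sinh_mul_line_ne_zero hs x)).symm

theorem integral_cschExpReg_line_sub_pi_div {a t : ℝ} (ha : 0 < a) (ht : a * t ∈ Ioo (-π) 0)
    (y : ℝ) :
    ∫ x : ℝ, cschExpReg a y (x + (t - π / a : ℝ) * I) = ∫ x : ℝ, cschExpReg a y (x + t * I) := by
  have hsin : Real.sin (a * t) < 0 := Real.sin_neg_of_neg_of_neg_pi_lt ht.2 ht.1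
  have hsin' : Real.sin (a * (t - π / a)) ≠ 0 := by
    rw [sin_mul_sub_pi_div ha.ne']; exact neg_ne_zero.mpr hsin.ne
  have hπa : 0 < π / a := div_pos Real.pi_pos ha
  have ht₁ : -π / a < t := (div_lt_iff₀' ha).mpr ht.1
  have ht₂ : t < 0 := neg_of_mul_neg_right ht.2 ha.le
  have hline : [[t - π / a, t]] = Icc (t - π / a) t := uIcc_of_le (by linarith)
  have hstrip : [[t - π / a, t]] ⊆ Ioo (-(2 * π / a)) 0 := by
    rw [hline]
    intro s hs
    constructor <;> linarith [hs.1, hs.2, neg_div a π, mul_div_assoc 2 π a]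
  have hbound : ∀ x : ℝ, x ≠ 0 → ∀ s ∈ [[t - π / a, t]], ‖cschExpReg a y (x + s * I)‖ ≤
      |a| * (Real.exp ((π / a - t) * |y|) + Real.exp (π * y / a)) / |Real.sinh (a * x)| := by
    intro x hx s hs
    rw [hline] at hs
    have hs' : |s| ≤ π / a - t := by rw [abs_of_neg (by linarith [hs.2])]; linarith [hs.1]
    refine (norm_cschExpReg_le ha.ne' y (by simpa using hx)).trans ?_
    simp only [add_mul_I_re, add_mul_I_im]
    gcongr
  exact integral_add_mul_I_eq_of_differentiableOn_strip
    ((differentiableOn_cschExpReg ha y).mono (preimage_mono hstrip))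
    (tendsto_const_nhds.div_atTop (tendsto_abs_sinh_mul_cocompact ha.ne'))
    (mem_of_superset (isCompact_singleton (x := (0 : ℝ))).compl_mem_cocompact hbound)
    (integrable_cschExpReg_line ha.ne' hsin' y) (integrable_cschExpReg_line ha.ne' hsin.ne y)

theorem integral_cschExp_line_mul_one_add_exp {a t : ℝ} (ha : 0 < a) (ht : a * t ∈ Ioo (-π) 0)
    (y : ℝ) :
    (∫ x : ℝ, cschExp a y (x + t * I)) * (1 + Real.exp (π * y / a)) =
      2 * π * I * Real.exp (π * y / a) := by
  set E : ℂ := (Real.exp (π * y / a) : ℂ)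
  have hsin : Real.sin (a * t) < 0 := Real.sin_neg_of_neg_of_neg_pi_lt ht.2 ht.1
  have hf := integrable_cschExp_line hsin.ne y
  have hg := integrable_cschExp_line hsin.ne 0
  have hJ : ∫ x : ℝ, cschExp a 0 (x + t * I) = π * I := by
    simpa [cschExp] using integral_div_sinh_line ha hsin
  have hupper (x : ℝ) : cschExpReg a y (x + t * I) =
      cschExp a y (x + t * I) - E * cschExp a 0 (x + t * I) :=
    cschExpReg_eq ha.ne' y (sinh_mul_line_ne_zero hsin.ne x)
  have hlower (x : ℝ) : cschExpReg a y (x + (t - π / a : ℝ) * I) =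
      -E * cschExp a y (x + t * I) + E * cschExp a 0 (x + t * I) := by
    have hsin' : Real.sin (a * (t - π / a)) ≠ 0 := by
      rw [sin_mul_sub_pi_div ha.ne']; exact neg_ne_zero.mpr hsin.ne
    rw [cschExpReg_eq ha.ne' y (sinh_mul_line_ne_zero hsin' x)]
    have hx : (x : ℂ) + (t - π / a : ℝ) * I = x + t * I - π / a * I := by push_cast; ring
    rw [hx, cschExp_sub_pi_div_mul_I ha.ne', cschExp_sub_pi_div_mul_I ha.ne']
    simp only [mul_zero, zero_div, Real.exp_zero, ofReal_one]
    ring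
  have h := integral_cschExpReg_line_sub_pi_div ha ht y
  simp only [hupper, hlower] at h
  rw [integral_add (hf.const_mul _) (hg.const_mul _), integral_sub hf (hg.const_mul _),
    integral_const_mul, integral_const_mul, hJ] at h
  linear_combination -h

theorem stmt_11 (a σ y : ℝ) (ha : 0 < a) (hσ : 0 < σ) (hσa : σ * a < π) :
    Integrable (fun s : ℝ =>
      ((a : ℂ) / Complex.sinh ((a : ℂ) * ((s : ℂ) - Complex.I * σ))) *
        Complex.exp (Complex.I * ((s : ℂ) - Complex.I * σ) * y)) ∧
    (2 * (π : ℂ) * Complex.I)⁻¹ *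
        ∫ s : ℝ, ((a : ℂ) / Complex.sinh ((a : ℂ) * ((s : ℂ) - Complex.I * σ))) *
          Complex.exp (Complex.I * ((s : ℂ) - Complex.I * σ) * y) =
      ((Real.exp (π * y / a) / (1 + Real.exp (π * y / a)) : ℝ) : ℂ) := by
  have hline (s : ℝ) : (s : ℂ) - I * σ = s + (-σ : ℝ) * I := by push_cast; ring
  have ht : a * -σ ∈ Ioo (-π) 0 := ⟨by nlinarith, by nlinarith⟩
  have hint := integrable_cschExp_line (Real.sin_neg_of_neg_of_neg_pi_lt ht.2 ht.1).ne y
  have hval := integral_cschExp_line_mul_one_add_exp ha ht y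
  simp only [cschExp, ← hline] at hint hval
  refine ⟨hint, ?_⟩
  have h1E : (1 : ℂ) + Real.exp (π * y / a) ≠ 0 := by
    exact_mod_cast (by positivity : (0 : ℝ) < 1 + Real.exp (π * y / a)).ne'
  have h2πI : 2 * (π : ℂ) * I ≠ 0 := by simp [Real.pi_ne_zero]
  rw [ofReal_div, ofReal_add, ofReal_one, inv_mul_eq_div, div_eq_div_iff h2πI h1E]
  linear_combination hval
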